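/- Let L be an n-dimensional antisymmetric ℤ_p-algebra and M ⊆ L an n-dimensional submodule. Then the submodules [M,M] and [L,L] have the same rank as ℤ_p-modules. -/

import Mathlib

/-- The submodule generated by all brackets `f a b` with `a ∈ S`, `b ∈ T`. -/
noncomputable def bracketSub {p : ℕ} [Fact p.Prime] {L : Type*} [AddCommGroup L] [Module ℤ_[p] L]
    (f : L →ₗ[ℤ_[p]] L →ₗ[ℤ_[p]] L) (S T : Submodule ℤ_[p] L) : Submodule ℤ_[p] L :=
  Submodule.span ℤ_[p] {z | ∃ a ∈ S, ∃ b ∈ T, z = f a b}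

/-!
A full-rank submodule `M` of `L` has torsion quotient `L ⧸ M`, and since `L` is finitely
generated a single nonzero scalar `c` kills it: `c • L ⊆ M`. Then `z ↦ c² • z` maps `[L, L]`
injectively into `[M, M] ⊆ [L, L]`, so the two brackets have the same rank.
-/

namespace Submodule

variable {R L : Type*} [CommRing R] [IsDomain R] [AddCommGroup L] [Module R L]

theorem exists_smul_mem_of_finrank_eq [Module.Finite R L] {M : Submodule R L}
    (hM : Module.finrank R M = Module.finrank R L) : ∃ c : R, c ≠ 0 ∧ ∀ x : L, c • x ∈ M := by
  have hquot : Module.finrank R (L ⧸ M) = 0 := by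
    have := M.finrank_quotient_add_finrank
    omega
  obtain ⟨c, hann, hc⟩ := annihilator_top_inter_nonZeroDivisors
    (Module.finrank_eq_zero_iff_isTorsion.mp hquot)
  refine ⟨c, nonZeroDivisors.ne_zero hc, fun x => ?_⟩
  rw [← Quotient.mk_eq_zero, Quotient.mk_smul]
  exact mem_annihilator.mp hann _ mem_top

theorem rank_eq_of_le_of_smul_mem [Module.IsTorsionFree R L] {N N' : Submodule R L}
    (hle : N ≤ N') {c : R} (hc : c ≠ 0) (hsmul : ∀ x ∈ N', c • x ∈ N) :
    Module.rank R N = Module.rank R N' := by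
  refine le_antisymm (rank_mono hle) ?_
  let g : N' →ₗ[R] N := (c • LinearMap.id : L →ₗ[R] L).restrict hsmul
  have hg : Function.Injective g := fun x y hxy =>
    Subtype.ext (smul_right_injective L hc (congrArg Subtype.val hxy))
  exact LinearMap.rank_le_of_injective g hg

end Submodule

section Bracket

variable {p : ℕ} [Fact p.Prime] {L : Type*} [AddCommGroup L] [Module ℤ_[p] L]
  (f : L →ₗ[ℤ_[p]] L →ₗ[ℤ_[p]] L)

theorem bracketSub_mono {S S' T T' : Submodule ℤ_[p] L} (hS : S ≤ S') (hT : T ≤ T') :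
    bracketSub f S T ≤ bracketSub f S' T' :=
  Submodule.span_mono fun _ ⟨a, ha, b, hb, hz⟩ => ⟨a, hS ha, b, hT hb, hz⟩

theorem smul_mem_bracketSub {S S' T T' : Submodule ℤ_[p] L} {a b : ℤ_[p]}
    (hS : ∀ x ∈ S', a • x ∈ S) (hT : ∀ y ∈ T', b • y ∈ T) :
    ∀ z ∈ bracketSub f S' T', (a * b) • z ∈ bracketSub f S T := by
  suffices bracketSub f S' T' ≤ (bracketSub f S T).comap ((a * b) • LinearMap.id) from
    fun z hz => this hz
  refine Submodule.span_le.mpr ?_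
  rintro _ ⟨x, hx, y, hy, rfl⟩
  refine Submodule.subset_span ⟨a • x, hS x hx, b • y, hT y hy, ?_⟩
  simp only [LinearMap.smul_apply, LinearMap.id_apply, map_smul, smul_smul, mul_comm]

end Bracket

theorem stmt9_general (p : ℕ) [Fact p.Prime] (n : ℕ) {L : Type*} [AddCommGroup L]
    [Module ℤ_[p] L] [Module.Free ℤ_[p] L] [Module.Finite ℤ_[p] L]
    (hL : Module.finrank ℤ_[p] L = n)
    (f : L →ₗ[ℤ_[p]] L →ₗ[ℤ_[p]] L)
    (M : Submodule ℤ_[p] L) (hM : Module.finrank ℤ_[p] M = n) :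
    Module.finrank ℤ_[p] (bracketSub f M M) =
      Module.finrank ℤ_[p] (bracketSub f ⊤ ⊤) := by
  obtain ⟨c, hc, hcM⟩ := Submodule.exists_smul_mem_of_finrank_eq (hM.trans hL.symm)
  have hrank := Submodule.rank_eq_of_le_of_smul_mem (bracketSub_mono f le_top le_top)
    (mul_ne_zero hc hc) (smul_mem_bracketSub f (fun x _ => hcM x) (fun x _ => hcM x))
  exact congrArg Cardinal.toNat hrank

theorem stmt9 (p : ℕ) [Fact p.Prime] (n : ℕ) {L : Type*} [AddCommGroup L]
    [Module ℤ_[p] L] [Module.Free ℤ_[p] L] [Module.Finite ℤ_[p] L]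
    (hL : Module.finrank ℤ_[p] L = n)
    (f : L →ₗ[ℤ_[p]] L →ₗ[ℤ_[p]] L) (hanti : ∀ z : L, f z z = 0)
    (M : Submodule ℤ_[p] L) (hM : Module.finrank ℤ_[p] M = n) :
    Module.finrank ℤ_[p] (bracketSub f M M) =
      Module.finrank ℤ_[p] (bracketSub f ⊤ ⊤) :=
  stmt9_general p n hL f M hM
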